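/- Let A be a real n×n matrix, B a real n×m matrix, R a symmetric positive definite m×m matrix, and let P₁, P₂ be symmetric positive semidefinite n×n matrices with Riccati gains K₁ := (R + BᵀP₁B)⁻¹BᵀP₁A and K₂ := (R + BᵀP₂B)⁻¹BᵀP₂A. Then ‖K₁ − K₂‖ ≤ ( ‖A − BK₂‖ · ‖B‖ / λ_min(R) ) · ‖P₁ − P₂‖. -/

import Mathlib

open Matrix Finset

/-- Spectral norm of a real matrix: the operator norm with respect to the
Euclidean norms on the domain and codomain. -/
noncomputable def specNorm {p q : ℕ} (M : Matrix (Fin p) (Fin q) ℝ) : ℝ :=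
  ‖LinearMap.toContinuousLinearMap (Matrix.toEuclideanLin M)‖

/-- Spectral radius of a real square matrix: the largest modulus of a
(complex) eigenvalue. -/
noncomputable def specRad {p : ℕ} (M : Matrix (Fin p) (Fin p) ℝ) : ℝ :=
  sSup {r : ℝ | ∃ μ ∈ spectrum ℂ (M.map (algebraMap ℝ ℂ)), r = ‖μ‖}

/-- Smallest (real) eigenvalue of a square matrix. -/
noncomputable def lambdaMin {p : ℕ} (S : Matrix (Fin p) (Fin p) ℝ) : ℝ :=
  sInf {r : ℝ | ∃ v : Fin p → ℝ, v ≠ 0 ∧ S.mulVec v = r • v}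

/-- `W`-induced norm of `M`: `sup_{z ≠ 0} √((zᵀMᵀWMz)/(zᵀWz))`. -/
noncomputable def winducedNorm {p : ℕ} (W M : Matrix (Fin p) (Fin p) ℝ) : ℝ :=
  sSup {r : ℝ | ∃ z : Fin p → ℝ, z ≠ 0 ∧
    r = Real.sqrt ((z ⬝ᵥ (Mᵀ * W * M).mulVec z) / (z ⬝ᵥ W.mulVec z))}

/-- `W`-relative bound of a symmetric matrix `X`: `sup_{z ≠ 0} (zᵀXz)/(zᵀWz)`. -/
noncomputable def wrelBound {p : ℕ} (W X : Matrix (Fin p) (Fin p) ℝ) : ℝ :=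
  sSup {r : ℝ | ∃ z : Fin p → ℝ, z ≠ 0 ∧
    r = (z ⬝ᵥ X.mulVec z) / (z ⬝ᵥ W.mulVec z)}

/-- Frobenius norm of a real matrix. -/
noncomputable def frobNorm {p q : ℕ} (M : Matrix (Fin p) (Fin q) ℝ) : ℝ :=
  Real.sqrt (∑ i, ∑ j, (M i j) ^ 2)

/-!
Write `Sᵢ = R + BᵀPᵢB`. The gain equations `SᵢKᵢ = BᵀPᵢA` give
`S₁(K₁ - K₂) = BᵀP₁A - S₂K₂ - Bᵀ(P₁ - P₂)BK₂ = Bᵀ(P₁ - P₂)(A - BK₂)`.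
Since `R ≤ S₁` in the Loewner order, `⟪x, S₁x⟫ ≥ λ_min(R)‖x‖²`, so `‖S₁y‖ ≥ λ_min(R)‖y‖` and
`‖K₁ - K₂‖ ≤ ‖S₁(K₁ - K₂)‖ / λ_min(R)`; submultiplicativity of the spectral norm finishes.
That `λ_min(R)` is attained (and hence positive) is the Rayleigh-quotient characterisation of
the least eigenvalue.
-/

open scoped Matrix.Norms.L2Operator MatrixOrder RealInnerProductSpace
open WithLp

theorem specNorm_eq_l2_opNorm {p q : ℕ} (M : Matrix (Fin p) (Fin q) ℝ) : specNorm M = ‖M‖ := rfl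

theorem mul_norm_le_norm_of_mul_norm_sq_le_inner {E : Type*} [NormedAddCommGroup E]
    [InnerProductSpace ℝ E] {x y : E} {c : ℝ} (h : c * ‖x‖ ^ 2 ≤ ⟪x, y⟫) : c * ‖x‖ ≤ ‖y‖ := by
  rcases eq_or_ne x 0 with rfl | hx
  · simp
  have hxy : c * ‖x‖ * ‖x‖ ≤ ‖y‖ * ‖x‖ := by
    nlinarith [real_inner_le_norm x y, mul_comm ‖x‖ ‖y‖]
  exact le_of_mul_le_mul_right hxy (norm_pos_iff.mpr hx)

namespace ContinuousLinearMap

theorem bddBelow_rayleighQuotient_ne_zero {𝕜 E : Type*} [RCLike 𝕜] [NormedAddCommGroup E]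
    [InnerProductSpace 𝕜 E] (T : E →L[𝕜] E) :
    BddBelow (Set.range fun x : {x : E // x ≠ 0} ↦ T.rayleighQuotient x) :=
  ⟨-‖T‖, by rintro _ ⟨x, rfl⟩; exact neg_le_of_abs_le (T.rayleighQuotient_le_norm x)⟩

theorem opNorm_le_opNorm_comp_div {𝕜 E F G : Type*} [NontriviallyNormedField 𝕜]
    [SeminormedAddCommGroup E] [SeminormedAddCommGroup F] [SeminormedAddCommGroup G]
    [NormedSpace 𝕜 E] [NormedSpace 𝕜 F] [NormedSpace 𝕜 G] {c : ℝ} (hc : 0 < c)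
    {S : F →L[𝕜] G} (hS : ∀ y, c * ‖y‖ ≤ ‖S y‖) (T : E →L[𝕜] F) :
    ‖T‖ ≤ ‖S.comp T‖ / c :=
  T.opNorm_le_bound (by positivity) fun x ↦ by
    rw [div_mul_eq_mul_div, le_div_iff₀ hc, mul_comm]
    exact (hS (T x)).trans ((S.comp T).le_opNorm x)

end ContinuousLinearMap

section LambdaMin

variable {p : ℕ} {R : Matrix (Fin p) (Fin p) ℝ}

theorem isLeast_eigenvalues_iInf_rayleighQuotient (hR : R.IsHermitian) [NeZero p] :
    IsLeast {r : ℝ | ∃ v : Fin p → ℝ, v ≠ 0 ∧ R *ᵥ v = r • v}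
      (⨅ x : {x : EuclideanSpace ℝ (Fin p) // x ≠ 0},
        (toEuclideanCLM (𝕜 := ℝ) R).rayleighQuotient x) := by
  have hT : (toEuclideanLin R).IsSymmetric := isSymmetric_toEuclideanLin_iff.2 hR
  constructor
  · obtain ⟨v, hv_mem, hv0⟩ := hT.hasEigenvalue_iInf_of_finiteDimensional.exists_hasEigenvector
    exact ⟨ofLp v, by simpa using hv0, congrArg ofLp (Module.End.mem_eigenspace_iff.mp hv_mem)⟩
  · rintro r ⟨v, hv0, hv⟩
    have hx : toLp 2 v ≠ 0 := by simpa using hv0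
    have hRv : toEuclideanCLM (𝕜 := ℝ) R (toLp 2 v) = r • toLp 2 v := by
      rw [toEuclideanCLM_toLp, hv, toLp_smul]
    calc _ ≤ (toEuclideanCLM (𝕜 := ℝ) R).rayleighQuotient (toLp 2 v) :=
          ciInf_le (toEuclideanCLM (𝕜 := ℝ) R).bddBelow_rayleighQuotient_ne_zero ⟨toLp 2 v, hx⟩
      _ = r := by
        rw [ContinuousLinearMap.rayleighQuotient, ContinuousLinearMap.reApplyInnerSelf_apply, hRv,
          real_inner_smul_left, real_inner_self_eq_norm_sq, RCLike.re_to_real,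
          mul_div_cancel_right₀ _ (by positivity)]

theorem lambdaMin_mul_norm_sq_le_inner (hR : R.IsHermitian) (x : EuclideanSpace ℝ (Fin p)) :
    lambdaMin R * ‖x‖ ^ 2 ≤ ⟪x, toEuclideanCLM (𝕜 := ℝ) R x⟫ := by
  rcases eq_or_ne x 0 with rfl | hx
  · simp
  have : NeZero p := ⟨by rintro rfl; exact hx (Subsingleton.elim _ _)⟩
  have h := ciInf_le (toEuclideanCLM (𝕜 := ℝ) R).bddBelow_rayleighQuotient_ne_zero ⟨x, hx⟩
  rw [ContinuousLinearMap.rayleighQuotient, ContinuousLinearMap.reApplyInnerSelf_apply,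
    RCLike.re_to_real, real_inner_comm, le_div_iff₀ (by positivity)] at h
  rwa [lambdaMin, (isLeast_eigenvalues_iInf_rayleighQuotient hR).csInf_eq]

theorem Matrix.PosSemidef.lambdaMin_nonneg (hR : R.PosSemidef) : 0 ≤ lambdaMin R := by
  refine Real.sInf_nonneg fun r ⟨v, hv0, hv⟩ ↦ ?_
  have hvRv := hR.dotProduct_mulVec_nonneg v
  rw [hv, dotProduct_smul, star_trivial, smul_eq_mul] at hvRv
  exact nonneg_of_mul_nonneg_left hvRv (dotProduct_self_star_pos_iff.mpr hv0)

theorem Matrix.PosDef.lambdaMin_pos [NeZero p] (hR : R.PosDef) : 0 < lambdaMin R := by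
  have hmin := isLeast_eigenvalues_iInf_rayleighQuotient hR.isHermitian
  obtain ⟨v, hv0, hv⟩ := hmin.1
  have hvRv := hR.dotProduct_mulVec_pos hv0
  rw [hv, dotProduct_smul, star_trivial, smul_eq_mul] at hvRv
  rw [lambdaMin, hmin.csInf_eq]
  exact pos_of_mul_pos_left hvRv (dotProduct_self_star_pos_iff.mpr hv0).le

end LambdaMin

section Order

variable {ι κ : Type*} [Fintype ι] [Fintype κ]

theorem Matrix.PosSemidef.transpose_mul_mul_same {P : Matrix ι ι ℝ} (hP : P.PosSemidef)
    (B : Matrix ι κ ℝ) : (Bᵀ * P * B).PosSemidef := by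
  simpa only [conjTranspose_eq_transpose_of_trivial] using hP.conjTranspose_mul_mul_same B

theorem inner_toEuclideanCLM_le_of_le [DecidableEq ι] {R S : Matrix ι ι ℝ} (hRS : R ≤ S)
    (x : EuclideanSpace ℝ ι) :
    ⟪x, toEuclideanCLM (𝕜 := ℝ) R x⟫ ≤ ⟪x, toEuclideanCLM (𝕜 := ℝ) S x⟫ := by
  have h := (Matrix.le_iff.mp hRS).dotProduct_mulVec_nonneg (ofLp x)
  rw [star_trivial, sub_mulVec, dotProduct_sub, sub_nonneg] at h
  simpa only [inner_toEuclideanCLM] using h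

end Order

theorem l2_opNorm_le_div_lambdaMin {p : ℕ} {κ : Type*} [Fintype κ] [DecidableEq κ]
    {R S : Matrix (Fin p) (Fin p) ℝ} (hR : R.PosDef) (hRS : R ≤ S) (M : Matrix (Fin p) κ ℝ) :
    ‖M‖ ≤ ‖S * M‖ / lambdaMin R := by
  rcases Nat.eq_zero_or_pos p with rfl | hp
  · rw [Subsingleton.elim M 0, norm_zero]
    exact div_nonneg (norm_nonneg _) hR.posSemidef.lambdaMin_nonneg
  have : NeZero p := NeZero.of_pos hp
  have hS (y : EuclideanSpace ℝ (Fin p)) : lambdaMin R * ‖y‖ ≤ ‖toEuclideanCLM (𝕜 := ℝ) S y‖ :=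
    mul_norm_le_norm_of_mul_norm_sq_le_inner <|
      (lambdaMin_mul_norm_sq_le_inner hR.isHermitian y).trans (inner_toEuclideanCLM_le_of_le hRS y)
  have hSM : (toEuclideanLin.trans LinearMap.toContinuousLinearMap) (S * M) =
      (toEuclideanCLM (𝕜 := ℝ) S).comp
        ((toEuclideanLin.trans LinearMap.toContinuousLinearMap) M) := by
    ext x
    simp [mulVec_mulVec]
  rw [l2_opNorm_def, l2_opNorm_def, hSM]
  exact ContinuousLinearMap.opNorm_le_opNorm_comp_div hR.lambdaMin_pos hS _

section RiccatiGain

variable {ι κ α : Type*} [Fintype ι] [Fintype κ] [DecidableEq κ] [CommRing α]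
  (A : Matrix ι ι α) (B : Matrix ι κ α) (R : Matrix κ κ α)

noncomputable def riccatiGain (P : Matrix ι ι α) : Matrix κ ι α :=
  (R + Bᵀ * P * B)⁻¹ * (Bᵀ * P * A)

variable {A B R}

theorem mul_riccatiGain {P : Matrix ι ι α} (hP : IsUnit (R + Bᵀ * P * B).det) :
    (R + Bᵀ * P * B) * riccatiGain A B R P = Bᵀ * P * A :=
  mul_nonsing_inv_cancel_left _ _ hP

theorem mul_riccatiGain_sub_riccatiGain {P₁ P₂ : Matrix ι ι α}
    (hP₁ : IsUnit (R + Bᵀ * P₁ * B).det) (hP₂ : IsUnit (R + Bᵀ * P₂ * B).det) :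
    (R + Bᵀ * P₁ * B) * (riccatiGain A B R P₁ - riccatiGain A B R P₂) =
      Bᵀ * (P₁ - P₂) * (A - B * riccatiGain A B R P₂) := by
  have hS₁ : R + Bᵀ * P₁ * B = (R + Bᵀ * P₂ * B) + Bᵀ * (P₁ - P₂) * B := by
    rw [Matrix.mul_sub, Matrix.sub_mul]; abel
  rw [Matrix.mul_sub, mul_riccatiGain hP₁, hS₁, Matrix.add_mul, mul_riccatiGain hP₂]
  simp only [Matrix.mul_sub, Matrix.sub_mul, Matrix.mul_assoc]
  abel

end RiccatiGain

/-- Lipschitz-type bound on the Riccati gain as a function of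
the Riccati matrix: `‖K₁ - K₂‖ ≤ (‖A - BK₂‖·‖B‖/λ_min(R))·‖P₁ - P₂‖`. -/
theorem riccati_gain_difference_bound {n m : ℕ}
    (A : Matrix (Fin n) (Fin n) ℝ) (B : Matrix (Fin n) (Fin m) ℝ)
    (R : Matrix (Fin m) (Fin m) ℝ) (P1 P2 : Matrix (Fin n) (Fin n) ℝ)
    (hR : R.PosDef) (hP1 : P1.PosSemidef) (hP2 : P2.PosSemidef) :
    letI K1 := (R + Bᵀ * P1 * B)⁻¹ * (Bᵀ * P1 * A)
    letI K2 := (R + Bᵀ * P2 * B)⁻¹ * (Bᵀ * P2 * A)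
    specNorm (K1 - K2)
      ≤ specNorm (A - B * K2) * specNorm B / lambdaMin R * specNorm (P1 - P2) := by
  show specNorm (riccatiGain A B R P1 - riccatiGain A B R P2)
    ≤ specNorm (A - B * riccatiGain A B R P2) * specNorm B / lambdaMin R * specNorm (P1 - P2)
  set K2 := riccatiGain A B R P2
  simp only [specNorm_eq_l2_opNorm]
  have hBPB1 := hP1.transpose_mul_mul_same B
  have hS1 := (hR.add_posSemidef hBPB1).det_pos.ne'.isUnit
  have hS2 := (hR.add_posSemidef (hP2.transpose_mul_mul_same B)).det_pos.ne'.isUnit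
  have hlambdaMin := hR.posSemidef.lambdaMin_nonneg
  calc ‖riccatiGain A B R P1 - K2‖
      ≤ ‖(R + Bᵀ * P1 * B) * (riccatiGain A B R P1 - K2)‖ / lambdaMin R :=
        l2_opNorm_le_div_lambdaMin hR (le_add_of_nonneg_right hBPB1.nonneg) _
    _ = ‖Bᵀ * (P1 - P2) * (A - B * K2)‖ / lambdaMin R := by
        rw [mul_riccatiGain_sub_riccatiGain hS1 hS2]
    _ ≤ ‖Bᵀ‖ * ‖P1 - P2‖ * ‖A - B * K2‖ / lambdaMin R := by
        gcongr
        exact (l2_opNorm_mul _ _).trans (by gcongr; exact l2_opNorm_mul _ _)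
    _ = ‖A - B * K2‖ * ‖B‖ / lambdaMin R * ‖P1 - P2‖ := by
        rw [← conjTranspose_eq_transpose_of_trivial, l2_opNorm_conjTranspose]
        ring
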